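/- Let G be a kite-augmented 1-plane graph, let s and t be distinct vertices of G, and let H be an (s,t)-subgraph of G. Then H contains an (s,t)-path P that is a shortest (s,t)-path in H and is non-self-crossing, i.e., no two edges of P cross each other in the drawing. -/

import Mathlib

open SimpleGraph Set

namespace CopsRobbers

variable {V : Type}

/-- One step of a player in the game: stay put or move to an adjacent vertex. -/
def Step (G : SimpleGraph V) (a b : V) : Prop := a = b ∨ G.Adj a b

/-- `u` is within graph distance `d` of `v` in `G`. -/
def WithinDist (G : SimpleGraph V) (d : ℕ) (u v : V) : Prop :=
  ∃ w : G.Walk u v, w.length ≤ d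

/-- `p` cops have a strategy on `G` that guarantees capturing the robber at distance `d`
within finitely many rounds.  A cop strategy is a function `F` from the history of robber
positions to the positions of the `p` cops (`F []` gives the initial placement, chosen
before the robber places himself); the robber is modelled by an arbitrary trajectory
`r : ℕ → V` of vertices, each step staying put or moving along an edge.  Capture happens
if after some robber move, or after the cops' reply to it, some cop is within distance
`d` of the robber. -/
def CopsWin (G : SimpleGraph V) (d p : ℕ) : Prop :=
  ∃ F : List V → Fin p → V,
    (∀ (hist : List V) (x : V) (i : Fin p), Step G (F hist i) (F (hist ++ [x]) i)) ∧
    ∀ r : ℕ → V, (∀ n, Step G (r n) (r (n + 1))) →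
      ∃ (n : ℕ) (i : Fin p),
        WithinDist G d (F (List.ofFn fun m : Fin n => r m.val) i) (r n) ∨
        WithinDist G d (F (List.ofFn fun m : Fin (n + 1) => r m.val) i) (r n)

/-- The distance-`d` cop number of `G`: the least number of cops that can guarantee
capture at distance `d`. -/
noncomputable def copNumber (G : SimpleGraph V) (d : ℕ) : ℕ :=
  sInf { p | CopsWin G d p }

end CopsRobbers
namespace CopsRobbers

/-- A drawing of a finite simple graph in the plane: vertices go to distinct points, every
edge `uv` is drawn as a simple arc `arc u v` (parametrised on `[0,1]`, with
`arc v u` the reverse parametrisation) joining the endpoints, avoiding all vertex points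
in its interior, any two arcs meet in finitely many points, and no non-vertex point lies
on three or more arcs. -/
structure PlaneDrawing {V : Type} (G : SimpleGraph V) where
  vpos : V → ℝ × ℝ
  arc : V → V → ℝ → ℝ × ℝ
  vpos_inj : Function.Injective vpos
  arc_symm : ∀ u v, G.Adj u v → ∀ t : ℝ, arc u v t = arc v u (1 - t)
  arc_cont : ∀ u v, G.Adj u v → ContinuousOn (arc u v) (Set.Icc (0:ℝ) 1)
  arc_start : ∀ u v, G.Adj u v → arc u v 0 = vpos u
  arc_end : ∀ u v, G.Adj u v → arc u v 1 = vpos v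
  arc_injOn : ∀ u v, G.Adj u v → Set.InjOn (arc u v) (Set.Icc (0:ℝ) 1)
  arc_avoid : ∀ u v, G.Adj u v → ∀ t ∈ Set.Ioo (0:ℝ) 1, ∀ w, arc u v t ≠ vpos w
  finite_inter : ∀ u v w x, G.Adj u v → G.Adj w x → s(u, v) ≠ s(w, x) →
    (arc u v '' Set.Icc (0:ℝ) 1 ∩ arc w x '' Set.Icc (0:ℝ) 1).Finite
  no_triple : ∀ pt : ℝ × ℝ, pt ∉ Set.range vpos →
    ∀ u₁ v₁ u₂ v₂ u₃ v₃, G.Adj u₁ v₁ → G.Adj u₂ v₂ → G.Adj u₃ v₃ →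
      s(u₁, v₁) ≠ s(u₂, v₂) → s(u₁, v₁) ≠ s(u₃, v₃) → s(u₂, v₂) ≠ s(u₃, v₃) →
      ¬(pt ∈ arc u₁ v₁ '' Set.Icc (0:ℝ) 1 ∧ pt ∈ arc u₂ v₂ '' Set.Icc (0:ℝ) 1 ∧
        pt ∈ arc u₃ v₃ '' Set.Icc (0:ℝ) 1)

namespace PlaneDrawing

variable {V : Type} {G : SimpleGraph V}

/-- The edges `uv` and `wx` cross in the drawing: they are distinct edges sharing a point
interior to both arcs. -/
def Crosses (D : PlaneDrawing G) (u v w x : V) : Prop :=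
  G.Adj u v ∧ G.Adj w x ∧ s(u, v) ≠ s(w, x) ∧
    ∃ pt : ℝ × ℝ, pt ∈ D.arc u v '' Set.Ioo (0:ℝ) 1 ∧ pt ∈ D.arc w x '' Set.Ioo (0:ℝ) 1

/-- `e` is an uncrossed edge of the drawing. -/
def UncrossedE (D : PlaneDrawing G) (e : Sym2 V) : Prop :=
  ∀ a b w x, s(a, b) = e → ¬D.Crosses a b w x

/-- The set of crossing points lying on the edge `uv`. -/
def crossingPointsOn (D : PlaneDrawing G) (u v : V) : Set (ℝ × ℝ) :=
  { pt | pt ∈ D.arc u v '' Set.Ioo (0:ℝ) 1 ∧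
      ∃ w x, D.Crosses u v w x ∧ pt ∈ D.arc w x '' Set.Ioo (0:ℝ) 1 }

/-- `pt` is a crossing point of the drawing. -/
def IsCrossingPoint (D : PlaneDrawing G) (pt : ℝ × ℝ) : Prop :=
  ∃ u v w x, D.Crosses u v w x ∧ pt ∈ D.arc u v '' Set.Ioo (0:ℝ) 1 ∧
    pt ∈ D.arc w x '' Set.Ioo (0:ℝ) 1

/-- The drawing is `k`-plane: every edge is crossed at most `k` times. -/
def KPlane (D : PlaneDrawing G) (k : ℕ) : Prop :=
  ∀ u v, G.Adj u v → (D.crossingPointsOn u v).Finite ∧ (D.crossingPointsOn u v).ncard ≤ k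

/-- The drawing is 1-plane: every edge is crossed at most once, and (as usual) no two
edges sharing an endpoint cross, so every crossing has four distinct endpoints. -/
def OnePlane (D : PlaneDrawing G) : Prop :=
  D.KPlane 1 ∧ ∀ u v w x, D.Crosses u v w x → u ≠ w ∧ u ≠ x ∧ v ≠ w ∧ v ≠ x

/-- The parameter `X(G)` of the drawing: the least `n` such that for every crossing,
every pair of consecutive endpoints is joined by a path of length at most `n`. -/
noncomputable def Xparam (D : PlaneDrawing G) : ℕ :=
  sInf { n | ∀ u v w x, D.Crosses u v w x → ∀ a b : V, (a = u ∨ a = v) → (b = w ∨ b = x) →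
    ∃ p : G.Walk a b, p.length ≤ n }

/-- The parameter `x(G)` of the drawing: the least `n` such that for every crossing,
some pair of consecutive endpoints is joined by a path of length at most `n`. -/
noncomputable def xparam (D : PlaneDrawing G) : ℕ :=
  sInf { n | ∀ u v w x, D.Crosses u v w x → ∃ a b : V, (a = u ∨ a = v) ∧ (b = w ∨ b = x) ∧
    ∃ p : G.Walk a b, p.length ≤ n }

/-- The subset of the plane covered by the drawing. -/
def image (D : PlaneDrawing G) : Set (ℝ × ℝ) :=
  Set.range D.vpos ∪ ⋃ (u : V) (v : V) (_ : G.Adj u v), D.arc u v '' Set.Icc (0:ℝ) 1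

/-- Faces of the drawing: connected components of the complement. -/
def IsFace (D : PlaneDrawing G) (F : Set (ℝ × ℝ)) : Prop :=
  ∃ z ∉ D.image, F = connectedComponentIn D.imageᶜ z

/-- The subset of the plane covered by the arc of the (unordered) edge `e`. -/
def edgeArcSet (D : PlaneDrawing G) (e : Sym2 V) : Set (ℝ × ℝ) :=
  ⋃ (a : V) (b : V) (_ : G.Adj a b) (_ : s(a, b) = e), D.arc a b '' Set.Icc (0:ℝ) 1

/-- The skeleton of the drawing: the subgraph consisting of all uncrossed edges. -/
def skeleton (D : PlaneDrawing G) : SimpleGraph V where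
  Adj u v := G.Adj u v ∧ D.UncrossedE s(u, v)
  symm := by
    refine ⟨fun u v h => ?_⟩
    refine ⟨h.1.symm, ?_⟩
    rw [Sym2.eq_swap]
    exact h.2
  loopless := ⟨fun v h => G.loopless.irrefl v h.1⟩

/-- The subset of the plane covered by the drawing of the skeleton. -/
def skelImage (D : PlaneDrawing G) : Set (ℝ × ℝ) :=
  ⋃ (u : V) (v : V) (_ : G.Adj u v) (_ : D.UncrossedE s(u, v)), D.arc u v '' Set.Icc (0:ℝ) 1

/-- Faces of the skeleton: connected components of the complement of its drawing. -/
def IsSkelFace (D : PlaneDrawing G) (F : Set (ℝ × ℝ)) : Prop :=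
  ∃ z ∉ D.skelImage, F = connectedComponentIn D.skelImageᶜ z

/-- `κ` is a kite path for the crossing of `uv` and `wx` joining the consecutive
endpoints `u` and `w`: a shortest `(u,w)`-path all of whose edges are uncrossed and whose
internal vertices have degree `2`, such that the part of the arc of `uv` from `u` to the
crossing point, the arcs of `κ`, and the part of the arc of `wx` from the crossing point
to `w` together bound a face of the drawing. -/
def IsKitePath (D : PlaneDrawing G) (u v w x : V) (κ : G.Walk u w) : Prop :=
  D.Crosses u v w x ∧ κ.IsPath ∧ (∀ q : G.Walk u w, κ.length ≤ q.length) ∧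
  (∀ e ∈ κ.edges, D.UncrossedE e) ∧
  (∀ y ∈ κ.support, y ≠ u → y ≠ w → (G.neighborSet y).ncard = 2) ∧
  ∃ t s' : ℝ, t ∈ Set.Ioo (0:ℝ) 1 ∧ s' ∈ Set.Ioo (0:ℝ) 1 ∧ D.arc u v t = D.arc w x s' ∧
    ∃ F, D.IsFace F ∧
      frontier F = (D.arc u v '' Set.Icc 0 t) ∪ (⋃ e ∈ κ.edges, D.edgeArcSet e) ∪
        (D.arc w x '' Set.Icc 0 s')

/-- The drawing is kite-augmented: for every crossing and every pair of consecutive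
endpoints there is a kite path joining them. -/
def KiteAugmented (D : PlaneDrawing G) : Prop :=
  ∀ u v w x, D.Crosses u v w x → ∃ κ : G.Walk u w, D.IsKitePath u v w x κ

/-- The face-distance between any two distinct crossing points of the drawing is at
least `f`: every chain of faces `Fc 0, …, Fc (j-1)` linked by vertex or crossing points
`pts 0 = c₁, pts 1, …, pts j = c₂` on the boundaries of consecutive faces (i.e. every
path in the radial graph between the two crossing points) uses at least `f` faces. -/
def FaceDistGe (D : PlaneDrawing G) (f : ℕ) : Prop :=
  ∀ c₁ c₂ : ℝ × ℝ, D.IsCrossingPoint c₁ → D.IsCrossingPoint c₂ → c₁ ≠ c₂ →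
    ∀ (j : ℕ) (Fc : Fin j → Set (ℝ × ℝ)) (pts : Fin (j + 1) → ℝ × ℝ),
      (∀ i, D.IsFace (Fc i)) →
      (∀ i, pts i ∈ Set.range D.vpos ∨ D.IsCrossingPoint (pts i)) →
      pts 0 = c₁ → pts (Fin.last j) = c₂ →
      (∀ i : Fin j, pts i.castSucc ∈ frontier (Fc i) ∧ pts i.succ ∈ frontier (Fc i)) →
      f ≤ j

end PlaneDrawing

end CopsRobbers
namespace CopsRobbers

/-- `H` is (a copy of) the `k`-subdivision `G^(k)` of `G`: `φ` embeds the vertices of `G`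
into those of `H`, and for every ordered adjacent pair `u v` of `G`, the vertices
`p u v 0, p u v 1, …, p u v k` form the path of length `k` of `H` replacing the
edge `uv` (traversed in the opposite direction for `p v u`); the interior vertices
of these paths are fresh and pairwise disjoint for distinct edges, the edges of `H` are
exactly the edges of these paths, and every vertex of `H` arises from `G` or from a
path. -/
structure IsKSubdivision {V W : Type} (G : SimpleGraph V) (k : ℕ) (H : SimpleGraph W)
    (φ : V → W) (p : V → V → ℕ → W) : Prop where
  phi_inj : Function.Injective φ
  start : ∀ u v, G.Adj u v → p u v 0 = φ u
  finish : ∀ u v, G.Adj u v → p u v k = φ v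
  rev : ∀ u v, G.Adj u v → ∀ i ≤ k, p u v i = p v u (k - i)
  inj : ∀ u v, G.Adj u v → ∀ i ≤ k, ∀ j ≤ k, p u v i = p u v j → i = j
  internal : ∀ u v, G.Adj u v → ∀ i, 0 < i → i < k → p u v i ∉ Set.range φ
  disjoint : ∀ u v u' v', G.Adj u v → G.Adj u' v' → s(u, v) ≠ s(u', v') →
    ∀ i j, 0 < i → i < k → 0 < j → j < k → p u v i ≠ p u' v' j
  adj_iff : ∀ a b : W, H.Adj a b ↔ ∃ u v, ∃ _ : G.Adj u v, ∃ i < k,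
    (a = p u v i ∧ b = p u v (i + 1)) ∨ (b = p u v i ∧ a = p u v (i + 1))
  cover : ∀ w : W, (∃ v, w = φ v) ∨ ∃ u v, ∃ _ : G.Adj u v, ∃ i ≤ k, w = p u v i

/-- `H` together with its drawing `DH` is the subdivision `G^(k)` of the drawn graph
`(G, D)`, drawn by placing the subdivision vertices of each edge on its arc, so that the
crossings of `G^(k)` are exactly the crossings of `G`, occurring between subdivision
edges. -/
structure IsDrawnSubdivision {V W : Type} (G : SimpleGraph V) (D : PlaneDrawing G)
    (k : ℕ) (H : SimpleGraph W) (DH : PlaneDrawing H) (φ : V → W)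
    (p : V → V → ℕ → W) : Prop where
  sub : IsKSubdivision G k H φ p
  vpos_eq : ∀ v, DH.vpos (φ v) = D.vpos v
  on_arc : ∀ u v, G.Adj u v → ∀ i ≤ k, DH.vpos (p u v i) ∈ D.arc u v '' Set.Icc (0:ℝ) 1
  arcs_cover : ∀ u v, G.Adj u v →
    (⋃ i ∈ Finset.range k, DH.edgeArcSet s(p u v i, p u v (i + 1))) =
      D.arc u v '' Set.Icc (0:ℝ) 1
  cross_of : ∀ a b c e, DH.Crosses a b c e →
    ∃ u v w x, D.Crosses u v w x ∧ ∃ i < k, ∃ j < k,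
      s(a, b) = s(p u v i, p u v (i + 1)) ∧ s(c, e) = s(p w x j, p w x (j + 1))
  of_cross : ∀ u v w x, D.Crosses u v w x → ∃ i < k, ∃ j < k,
      DH.Crosses (p u v i) (p u v (i + 1)) (p w x j) (p w x (j + 1))

/-- `(H, DH)` is a 1-planarisation of the drawn graph `(G, D)`: a drawn subdivision
`G^(k)` of `G` whose drawing is 1-plane. -/
structure IsOnePlanarisation {V W : Type} (G : SimpleGraph V) (D : PlaneDrawing G)
    (k : ℕ) (H : SimpleGraph W) (DH : PlaneDrawing H) (φ : V → W)
    (p : V → V → ℕ → W) : Prop where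
  drawn : IsDrawnSubdivision G D k H DH φ p
  oneplane : DH.OnePlane

/-- `(K, DK)` is the kite-augmentation of the 1-plane drawn graph `(H, DH)` via the
embedding `ψ`: the drawing of `H` is kept unchanged, and for every crossing and every
pair of consecutive endpoints a new path with fresh internal vertices, of length equal to
the distance of the two endpoints in `H`, is added and drawn so that the resulting
drawing is a kite-augmented 1-plane drawing with the same crossings. -/
structure IsKiteAugmentationOf {W U : Type} {H : SimpleGraph W} (DH : PlaneDrawing H)
    {K : SimpleGraph U} (DK : PlaneDrawing K) (ψ : W → U) : Prop where
  inj : Function.Injective ψ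
  adj_iff : ∀ a b, K.Adj (ψ a) (ψ b) ↔ H.Adj a b
  vpos_eq : ∀ a, DK.vpos (ψ a) = DH.vpos a
  arc_eq : ∀ a b, H.Adj a b → ∀ t ∈ Set.Icc (0:ℝ) 1, DK.arc (ψ a) (ψ b) t = DH.arc a b t
  oneplane : DK.OnePlane
  kite : DK.KiteAugmented
  new_path : ∀ u v w x, DH.Crosses u v w x →
    ∃ κ : K.Walk (ψ u) (ψ w), κ.IsPath ∧ κ.length = H.dist u w ∧
      ∀ y ∈ κ.support, y ≠ ψ u → y ≠ ψ w → y ∉ Set.range ψ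
  new_deg : ∀ z : U, z ∉ Set.range ψ → (K.neighborSet z).ncard = 2
  cross_of : ∀ a b c e, DK.Crosses a b c e →
    ∃ u v w x, DH.Crosses u v w x ∧ s(a, b) = s(ψ u, ψ v) ∧ s(c, e) = s(ψ w, ψ x)

end CopsRobbers

namespace CopsRobbers

/-- The walk `w` of `G` lies inside the subgraph `S` of `G`. -/
def WalkInSubgraph {V : Type} {G : SimpleGraph V} (S : G.Subgraph) {a b : V}
    (w : G.Walk a b) : Prop :=
  (∀ y ∈ w.support, y ∈ S.verts) ∧ ∀ e ∈ w.edges, e ∈ S.edgeSet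

/-- `S` is an `(s,t)`-subgraph of the drawn graph `(G, D)`: a connected subgraph
containing `s` and `t` such that for every pair of distinct vertices `a, b` of `S` with
`{a, b} ≠ {s, t}`, every kite path `κ_{ab}` of `G` joining `a` and `b` is contained in
`S`. -/
def IsSTSubgraph {V : Type} {G : SimpleGraph V} (D : PlaneDrawing G) (s t : V)
    (S : G.Subgraph) : Prop :=
  S.coe.Connected ∧ s ∈ S.verts ∧ t ∈ S.verts ∧
    ∀ a b, a ∈ S.verts → b ∈ S.verts → a ≠ b → ({a, b} : Set V) ≠ {s, t} →
      ∀ (v x : V) (κ : G.Walk a b), D.IsKitePath a v b x κ → WalkInSubgraph S κ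

end CopsRobbers

/-! Among the shortest `(s,t)`-paths in `S`, take one with the fewest crossed edges. If two of
its edges `ab` and `cd`, met in this order, cross, replace its stretch `a → b ⇝ c` by the kite
path `κ_{ac}`. As `c` is an interior vertex of the path, `{a, c} ≠ {s, t}`, so `κ_{ac}` lies in
`S`; being a shortest `(a,c)`-path it is no longer than the stretch, and being uncrossed it
removes the crossed edge `ab` without adding any. Shortcutting the result to a path contradicts
the minimal choice. -/

namespace SimpleGraph.Walk

variable {V : Type} {G : SimpleGraph V}

lemma exists_eq_append_cons_of_mem_edges {s t : V} (p : G.Walk s t) {e : Sym2 V}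
    (he : e ∈ p.edges) :
    ∃ (c d : V) (hcd : G.Adj c d) (q₁ : G.Walk s c) (q₂ : G.Walk d t),
      p = q₁.append (cons hcd q₂) ∧ s(c, d) = e := by
  induction p with
  | nil => simp at he
  | cons h q ih =>
    rcases List.mem_cons.1 he with he | he
    · exact ⟨_, _, h, nil, q, by simp, he.symm⟩
    · obtain ⟨c, d, hcd, q₁, q₂, rfl, hE⟩ := ih he
      exact ⟨c, d, hcd, cons h q₁, q₂, by simp [cons_append], hE⟩

lemma exists_eq_append_cons_append_cons_of_mem_edges {s t : V} (p : G.Walk s t)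
    {e₁ e₂ : Sym2 V} (h₁ : e₁ ∈ p.edges) (h₂ : e₂ ∈ p.edges) (hne : e₁ ≠ e₂) :
    ∃ (a b c d : V) (hab : G.Adj a b) (hcd : G.Adj c d)
      (q₁ : G.Walk s a) (q₂ : G.Walk b c) (q₃ : G.Walk d t),
      p = q₁.append (cons hab (q₂.append (cons hcd q₃))) ∧
      ((s(a, b) = e₁ ∧ s(c, d) = e₂) ∨ (s(a, b) = e₂ ∧ s(c, d) = e₁)) := by
  induction p with
  | nil => simp at h₁
  | cons h q ih =>
    rcases List.mem_cons.1 h₁ with he₁ | he₁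
    · rcases List.mem_cons.1 h₂ with he₂ | he₂
      · exact absurd (he₁.trans he₂.symm) hne
      · obtain ⟨c, d, hcd, q₂, q₃, rfl, hE⟩ := q.exists_eq_append_cons_of_mem_edges he₂
        exact ⟨_, _, c, d, h, hcd, nil, q₂, q₃, by simp, Or.inl ⟨he₁.symm, hE⟩⟩
    rcases List.mem_cons.1 h₂ with he₂ | he₂
    · obtain ⟨c, d, hcd, q₂, q₃, rfl, hE⟩ := q.exists_eq_append_cons_of_mem_edges he₁
      exact ⟨_, _, c, d, h, hcd, nil, q₂, q₃, by simp, Or.inr ⟨he₂.symm, hE⟩⟩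
    · obtain ⟨a, b, c, d, hab, hcd, q₁, q₂, q₃, rfl, hE⟩ := ih he₁ he₂
      exact ⟨a, b, c, d, hab, hcd, cons h q₁, q₂, q₃, by simp [cons_append], hE⟩

lemma IsPath.notMem_support_of_append_cons {s a b t y : V} {p : G.Walk s a}
    {hab : G.Adj a b} {q : G.Walk b t} (hP : (p.append (cons hab q)).IsPath)
    (hy : y ∈ q.support) : y ∉ p.support := by
  have hnodup := hP.support_nodup
  rw [support_append, support_cons, List.tail_cons, List.nodup_append] at hnodup
  exact fun hy' => hnodup.2.2 y hy' y hy rfl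

end SimpleGraph.Walk

namespace CopsRobbers

open Walk

variable {V : Type} {G : SimpleGraph V}

namespace PlaneDrawing

variable {D : PlaneDrawing G} {u v w x : V}

lemma Crosses.symm_left (h : D.Crosses u v w x) : D.Crosses v u w x := by
  obtain ⟨huv, hwx, hne, pt, ⟨r, hr, hpt⟩, h2⟩ := h
  refine ⟨huv.symm, hwx, by rwa [Sym2.eq_swap], pt, ⟨1 - r, ?_, ?_⟩, h2⟩
  · exact ⟨by linarith [hr.2], by linarith [hr.1]⟩
  · rwa [← D.arc_symm u v huv]

lemma Crosses.comm (h : D.Crosses u v w x) : D.Crosses w x u v := by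
  obtain ⟨huv, hwx, hne, pt, hp1, hp2⟩ := h
  exact ⟨hwx, huv, hne.symm, pt, hp2, hp1⟩

lemma Crosses.symm_right (h : D.Crosses u v w x) : D.Crosses u v x w :=
  h.comm.symm_left.comm

lemma Crosses.of_sym2_eq {a b c d : V} (h : D.Crosses u v w x)
    (h₁ : s(a, b) = s(u, v)) (h₂ : s(c, d) = s(w, x)) : D.Crosses a b c d := by
  rw [Sym2.eq_iff] at h₁ h₂
  rcases h₁ with ⟨rfl, rfl⟩ | ⟨rfl, rfl⟩ <;> rcases h₂ with ⟨rfl, rfl⟩ | ⟨rfl, rfl⟩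
  · exact h
  · exact h.symm_right
  · exact h.symm_left
  · exact h.symm_left.symm_right

lemma Crosses.edge_ne (h : D.Crosses u v w x) : s(u, v) ≠ s(w, x) :=
  h.2.2.1

lemma Crosses.not_uncrossedE (h : D.Crosses u v w x) : ¬D.UncrossedE s(u, v) :=
  fun hu => hu u v w x rfl h

open Classical in
noncomputable def crossedEdges (D : PlaneDrawing G) {a b : V} (p : G.Walk a b) :
    Finset (Sym2 V) :=
  p.edges.toFinset.filter fun e => ¬D.UncrossedE e

@[simp]
lemma mem_crossedEdges {a b : V} {p : G.Walk a b} {e : Sym2 V} :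
    e ∈ D.crossedEdges p ↔ e ∈ p.edges ∧ ¬D.UncrossedE e := by
  simp [crossedEdges]

lemma crossedEdges_mono {a b c d : V} {p : G.Walk a b} {q : G.Walk c d}
    (h : p.edges ⊆ q.edges) : D.crossedEdges p ⊆ D.crossedEdges q :=
  fun _ he => mem_crossedEdges.2 ⟨h (mem_crossedEdges.1 he).1, (mem_crossedEdges.1 he).2⟩

lemma crossedEdges_reroute_ssubset {s a b c t : V} {q₁ : G.Walk s a} {hab : G.Adj a b}
    {q₂ : G.Walk b c} {q₃ : G.Walk c t} {κ : G.Walk a c}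
    (hP : (q₁.append (cons hab (q₂.append q₃))).IsPath)
    (hκ : ∀ e ∈ κ.edges, D.UncrossedE e) (hab' : ¬D.UncrossedE s(a, b)) :
    D.crossedEdges (q₁.append (κ.append q₃)) ⊂
      D.crossedEdges (q₁.append (cons hab (q₂.append q₃))) := by
  have hnodup := hP.isTrail.edges_nodup
  simp only [edges_append, edges_cons, List.nodup_append, List.nodup_cons, List.mem_cons,
    List.mem_append] at hnodup
  refine (Finset.ssubset_iff_of_subset fun e he => ?_).2 ⟨s(a, b), ?_, ?_⟩
  · obtain ⟨he, hcr⟩ := mem_crossedEdges.1 he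
    simp only [edges_append, List.mem_append] at he
    have : e ∉ κ.edges := fun h => hcr (hκ e h)
    simp only [mem_crossedEdges, edges_append, edges_cons, List.mem_append, List.mem_cons]
    tauto
  · simp [hab']
  · obtain ⟨-, ⟨hab₂₃, -⟩, hab₁⟩ := hnodup
    have hκab : s(a, b) ∉ κ.edges := fun h => hab' (hκ _ h)
    have hq₁ab : s(a, b) ∉ q₁.edges := fun h => hab₁ _ h _ (Or.inl rfl) rfl
    simp only [mem_crossedEdges, edges_append, List.mem_append, not_and_or]
    tauto

end PlaneDrawing

section WalkInSubgraph

variable {S : G.Subgraph}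

@[simp]
lemma walkInSubgraph_cons_iff {a b c : V} (h : G.Adj a b) (p : G.Walk b c) :
    WalkInSubgraph S (cons h p) ↔ a ∈ S.verts ∧ s(a, b) ∈ S.edgeSet ∧ WalkInSubgraph S p := by
  simp only [WalkInSubgraph, support_cons, edges_cons, List.forall_mem_cons]
  tauto

@[simp]
lemma walkInSubgraph_append_iff {a b c : V} (p : G.Walk a b) (q : G.Walk b c) :
    WalkInSubgraph S (p.append q) ↔ WalkInSubgraph S p ∧ WalkInSubgraph S q := by
  simp only [WalkInSubgraph, mem_support_append_iff, edges_append, List.mem_append]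
  refine ⟨fun h => ⟨⟨?_, ?_⟩, ?_, ?_⟩, fun h => ⟨?_, ?_⟩⟩
  all_goals grind [start_mem_support, end_mem_support]

lemma WalkInSubgraph.bypass [DecidableEq V] {a b : V} {p : G.Walk a b}
    (hp : WalkInSubgraph S p) : WalkInSubgraph S p.bypass :=
  ⟨fun y hy => hp.1 y (p.support_bypass_subset_support hy),
    fun e he => hp.2 e (p.edges_bypass_subset_edges he)⟩

lemma walkInSubgraph_map_hom {a b : S.verts} (p : S.coe.Walk a b) :
    WalkInSubgraph S (p.map S.hom) := by
  refine ⟨fun y hy => ?_, fun e he => ?_⟩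
  · rw [Walk.support_map, List.mem_map] at hy
    obtain ⟨x, -, rfl⟩ := hy
    exact x.2
  · rw [Walk.edges_map, List.mem_map] at he
    obtain ⟨e', he', rfl⟩ := he
    induction e' using Sym2.ind with
    | _ x y => exact Subgraph.mem_edgeSet.2 (p.adj_of_mem_edges he')

def IsShortestPathIn (S : G.Subgraph) {a b : V} (P : G.Walk a b) : Prop :=
  P.IsPath ∧ WalkInSubgraph S P ∧ ∀ Q : G.Walk a b, WalkInSubgraph S Q → P.length ≤ Q.length

lemma IsShortestPathIn.bypass_of_length_le [DecidableEq V] {a b : V} {P Q : G.Walk a b}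
    (hP : IsShortestPathIn S P) (hQ : WalkInSubgraph S Q) (hle : Q.length ≤ P.length) :
    IsShortestPathIn S Q.bypass :=
  ⟨Q.bypass_isPath, hQ.bypass, fun R hR =>
    Q.length_bypass_le_length.trans (hle.trans (hP.2.2 R hR))⟩

lemma exists_isShortestPathIn_of_walkInSubgraph {a b : V} {Q : G.Walk a b}
    (hQ : WalkInSubgraph S Q) : ∃ P : G.Walk a b, IsShortestPathIn S P := by
  classical
  have hex : ∃ n, ∃ R : G.Walk a b, WalkInSubgraph S R ∧ R.length = n := ⟨_, Q, hQ, rfl⟩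
  obtain ⟨R, hR, hRlen⟩ := Nat.find_spec hex
  refine ⟨R.bypass, R.bypass_isPath, hR.bypass, fun R' hR' => ?_⟩
  calc R.bypass.length ≤ R.length := R.length_bypass_le_length
    _ = Nat.find hex := hRlen
    _ ≤ R'.length := Nat.find_min' hex ⟨R', hR', rfl⟩

end WalkInSubgraph

namespace IsSTSubgraph

variable {D : PlaneDrawing G} {s t : V} {S : G.Subgraph}

lemma exists_isShortestPathIn (hS : IsSTSubgraph D s t S) :
    ∃ P : G.Walk s t, IsShortestPathIn S P := by
  obtain ⟨hconn, hs, ht, -⟩ := hS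
  obtain ⟨p⟩ := hconn ⟨s, hs⟩ ⟨t, ht⟩
  exact exists_isShortestPathIn_of_walkInSubgraph (walkInSubgraph_map_hom p)

lemma exists_card_crossedEdges_lt (hS : IsSTSubgraph D s t S) (hka : D.KiteAugmented)
    {P : G.Walk s t} (hP : IsShortestPathIn S P) {a b c e : V} (hab : s(a, b) ∈ P.edges)
    (hce : s(c, e) ∈ P.edges) (hcr : D.Crosses a b c e) :
    ∃ P' : G.Walk s t, IsShortestPathIn S P' ∧
      (D.crossedEdges P').card < (D.crossedEdges P).card := by
  classical
  obtain ⟨-, -, -, hkite⟩ := hS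
  obtain ⟨a', b', c', d', hab', hcd', q₁, q₂, q₃, rfl, horient⟩ :=
    P.exists_eq_append_cons_append_cons_of_mem_edges hab hce hcr.edge_ne
  have hcr' : D.Crosses a' b' c' d' := by
    rcases horient with ⟨h₁, h₂⟩ | ⟨h₁, h₂⟩
    · exact hcr.of_sym2_eq h₁ h₂
    · exact hcr.comm.of_sym2_eq h₁ h₂
  have hc'q₁ : c' ∉ q₁.support := hP.1.notMem_support_of_append_cons (by simp)
  have hc't : c' ≠ t := by
    have hpath := ((cons_isPath_iff _ _).1 hP.1.of_append_right).1.of_append_right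
    exact fun h => ((cons_isPath_iff _ _).1 hpath).2 (h ▸ q₃.end_mem_support)
  have hPS := hP.2.1
  simp only [walkInSubgraph_append_iff, walkInSubgraph_cons_iff] at hPS
  obtain ⟨hq₁S, ha'S, -, -, hc'S, hcd'S, hq₃S⟩ := hPS
  obtain ⟨κ, hκ⟩ := hka a' b' c' d' hcr'
  have hκS : WalkInSubgraph S κ := by
    refine hkite a' c' ha'S hc'S (fun h => hc'q₁ (h ▸ q₁.end_mem_support))
      (fun h => ?_) b' d' κ hκ
    have hc' : c' ∈ ({s, t} : Set V) := h ▸ Or.inr rfl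
    exact hc'.elim (fun h => hc'q₁ (h ▸ q₁.start_mem_support)) hc't
  obtain ⟨-, -, hκshortest, hκuncrossed, -⟩ := hκ
  have hκlen : κ.length ≤ (cons hab' q₂).length := hκshortest _
  refine ⟨(q₁.append (κ.append (cons hcd' q₃))).bypass, hP.bypass_of_length_le ?_ ?_, ?_⟩
  · simp only [walkInSubgraph_append_iff, walkInSubgraph_cons_iff]
    exact ⟨hq₁S, hκS, hc'S, hcd'S, hq₃S⟩
  · simp only [length_append, length_cons] at hκlen ⊢
    omega
  · calc _ ≤ (D.crossedEdges (q₁.append (κ.append (cons hcd' q₃)))).card :=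
          Finset.card_le_card (PlaneDrawing.crossedEdges_mono (edges_bypass_subset_edges _))
      _ < _ := Finset.card_lt_card
          (PlaneDrawing.crossedEdges_reroute_ssubset hP.1 hκuncrossed hcr'.not_uncrossedE)

end IsSTSubgraph

end CopsRobbers

open CopsRobbers in
theorem statement10_general {V : Type} (G : SimpleGraph V) (D : PlaneDrawing G)
    (hka : D.KiteAugmented) (s t : V)
    (S : G.Subgraph) (hS : IsSTSubgraph D s t S) :
    ∃ P : G.Walk s t, P.IsPath ∧ WalkInSubgraph S P ∧
      (∀ Q : G.Walk s t, WalkInSubgraph S Q → P.length ≤ Q.length) ∧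
      ∀ a b c e, s(a, b) ∈ P.edges → s(c, e) ∈ P.edges → ¬D.Crosses a b c e := by
  obtain ⟨P, hP⟩ := hS.exists_isShortestPathIn
  induction hn : (D.crossedEdges P).card using Nat.strong_induction_on generalizing P with
  | _ n ih =>
    by_cases hcross : ∃ a b c e, s(a, b) ∈ P.edges ∧ s(c, e) ∈ P.edges ∧ D.Crosses a b c e
    · obtain ⟨a, b, c, e, hab, hce, hcr⟩ := hcross
      obtain ⟨P', hP', hlt⟩ := hS.exists_card_crossedEdges_lt hka hP hab hce hcr
      exact ih _ (hn ▸ hlt) P' hP' rfl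
    · push Not at hcross
      exact ⟨P, hP.1, hP.2.1, hP.2.2, hcross⟩

open CopsRobbers in
/-- In a kite-augmented 1-plane graph `G`, every `(s,t)`-subgraph `S` contains an
`(s,t)`-path `P` that is a shortest `(s,t)`-path in `S` and is non-self-crossing. -/
theorem statement10 {V : Type} [Fintype V] (G : SimpleGraph V) (D : PlaneDrawing G)
    (h1 : D.OnePlane) (hka : D.KiteAugmented) (s t : V) (hst : s ≠ t)
    (S : G.Subgraph) (hS : IsSTSubgraph D s t S) :
    ∃ P : G.Walk s t, P.IsPath ∧ WalkInSubgraph S P ∧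
      (∀ Q : G.Walk s t, WalkInSubgraph S Q → P.length ≤ Q.length) ∧
      ∀ a b c e, s(a, b) ∈ P.edges → s(c, e) ∈ P.edges → ¬D.Crosses a b c e :=
  statement10_general G D hka s t S hS
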